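/- Let H_A, H_B, H_I be Hermitian operators on a finite-dimensional tensor-product Hilbert space H_A⊗H_B, with H_A, H_B acting on their respective factors and [H_I, H_A + H_B] = 0, and let H = H_A + H_B + H_I. Let β_A ≥ β_B be real numbers and take the initial state to be the product of Gibbs states ρ = (e^{−β_A H_A}/tr e^{−β_A H_A}) ⊗ (e^{−β_B H_B}/tr e^{−β_B H_B}). Then for every t, the heat transfer Q = tr[(e^{−iHt} ρ e^{iHt} − ρ)H_B] satisfies (β_B − β_A)·Q ≥ 0; i.e., the Clausius statement holds: heat does not flow from the colder system A into the hotter system B. -/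

import Mathlib

/-!
Put `K = β_A H_A ⊗ 1 + β_B 1 ⊗ H_B`. The initial state is the Gibbs state `e^{-K}/Z`, so
`log ρ = -K - log Z`. The evolved state `ρ(t) = UρU*` is a unitary conjugate of `ρ`: it has the
same trace and entropy, hence `S(ρ(t)‖ρ) = tr[(ρ(t) - ρ)K] = β_A ΔE_A + β_B ΔE_B`. Since `H`
commutes with `H_A + H_B`, energy is conserved, `ΔE_A = -ΔE_B = -Q`, so
`S(ρ(t)‖ρ) = (β_B - β_A) Q`, which is nonnegative by Klein's inequality.
-/

open Matrix Kronecker Complex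
open scoped ComplexOrder

noncomputable section

/-- Matrix logarithm of a Hermitian matrix via its spectral decomposition, with the
convention `log 0 = 0` on the spectrum (junk value `0` on non-Hermitian matrices). -/
def mlog {n : Type*} [Fintype n] [DecidableEq n] (A : Matrix n n ℂ) : Matrix n n ℂ :=
  if h : A.IsHermitian then
    (h.eigenvectorUnitary : Matrix n n ℂ) *
      Matrix.diagonal (fun i => (Real.log (h.eigenvalues i) : ℂ)) *
      (h.eigenvectorUnitary : Matrix n n ℂ)ᴴ
  else 0

/-- Von Neumann entropy `S(ρ) = -tr(ρ log ρ)` (with the convention `0 log 0 = 0`). -/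
def vN {n : Type*} [Fintype n] [DecidableEq n] (ρ : Matrix n n ℂ) : ℂ :=
  -(ρ * mlog ρ).trace

/-- Quantum relative entropy `S(ρ‖σ) = tr(ρ log ρ) - tr(ρ log σ)`. -/
def relEnt {n : Type*} [Fintype n] [DecidableEq n] (ρ σ : Matrix n n ℂ) : ℂ :=
  (ρ * mlog ρ).trace - (ρ * mlog σ).trace

/-- The Gibbs state `e^{-βH}/tr(e^{-βH})` of a Hamiltonian `H` at inverse temperature `β`. -/
def gibbs {n : Type*} [Fintype n] [DecidableEq n] (β : ℝ) (H : Matrix n n ℂ) :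
    Matrix n n ℂ :=
  (NormedSpace.exp ((-β : ℂ) • H)).trace⁻¹ • NormedSpace.exp ((-β : ℂ) • H)

/-- Unitary (Schrödinger) evolution `ρ(t) = e^{-iHt} ρ e^{iHt}` (with `ħ = 1`). -/
def evolve {n : Type*} [Fintype n] [DecidableEq n] (H ρ : Matrix n n ℂ) (t : ℝ) :
    Matrix n n ℂ :=
  NormedSpace.exp ((-(I * t)) • H) * ρ * NormedSpace.exp ((I * t) • H)

/-- Reduced density matrix on the first factor (partial trace over the second). -/
def redA {m n : Type*} [Fintype m] [Fintype n]
    (ρ : Matrix (m × n) (m × n) ℂ) : Matrix m m ℂ :=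
  Matrix.of fun i j => ∑ k, ρ (i, k) (j, k)

/-- Reduced density matrix on the second factor (partial trace over the first). -/
def redB {m n : Type*} [Fintype m] [Fintype n]
    (ρ : Matrix (m × n) (m × n) ℂ) : Matrix n n ℂ :=
  Matrix.of fun i j => ∑ k, ρ (k, i) (k, j)

/-- Bipartite mutual information `I_{A:B}(ϱ) = S(ϱ_A) + S(ϱ_B) - S(ϱ)`. -/
def mutInfo {m n : Type*} [Fintype m] [DecidableEq m] [Fintype n] [DecidableEq n]
    (ρ : Matrix (m × n) (m × n) ℂ) : ℂ :=
  vN (redA ρ) + vN (redB ρ) - vN ρ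

open scoped Matrix.Norms.L2Operator

theorem Real.sub_le_mul_log_sub_mul_log {p q : ℝ} (hp : 0 ≤ p) (hq : 0 < q) :
    p - q ≤ p * Real.log p - p * Real.log q := by
  rcases hp.eq_or_lt with rfl | hp
  · simpa using hq.le
  have h := mul_le_mul_of_nonneg_left (Real.self_sub_one_le_mul_log (div_nonneg hp.le hq.le))
    hq.le
  rwa [Real.log_div hp.ne' hq.ne', ← mul_assoc, mul_div_cancel₀ _ hq.ne', mul_sub,
    mul_div_cancel₀ _ hq.ne', mul_one, mul_sub] at h

section

variable {n : Type*} [Fintype n] [DecidableEq n]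

theorem sum_sub_sum_le_of_mem_doublyStochastic {p q : n → ℝ} {C : Matrix n n ℝ}
    (hC : C ∈ doublyStochastic ℝ n) (hp : ∀ i, 0 ≤ p i) (hq : ∀ j, 0 < q j) :
    ∑ i, p i - ∑ j, q j ≤
      ∑ i, p i * Real.log (p i) - ∑ i, ∑ j, C i j * (p i * Real.log (q j)) := by
  obtain ⟨hC0, hrow, hcol⟩ := mem_doublyStochastic_iff_sum.mp hC
  calc ∑ i, p i - ∑ j, q j = ∑ i, ∑ j, C i j * (p i - q j) := by
        simp only [mul_sub, Finset.sum_sub_distrib, ← Finset.sum_mul, hrow, one_mul]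
        rw [Finset.sum_comm (f := fun i j => C i j * q j)]
        simp only [← Finset.sum_mul, hcol, one_mul]
    _ ≤ ∑ i, ∑ j, C i j * (p i * Real.log (p i) - p i * Real.log (q j)) :=
        Finset.sum_le_sum fun i _ => Finset.sum_le_sum fun j _ =>
          mul_le_mul_of_nonneg_left (Real.sub_le_mul_log_sub_mul_log (hp i) (hq j)) (hC0 i j)
    _ = _ := by simp only [mul_sub, Finset.sum_sub_distrib, ← Finset.sum_mul, hrow, one_mul]

theorem normSq_mem_doublyStochastic_of_mem_unitaryGroup {T : Matrix n n ℂ}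
    (hT : T ∈ unitaryGroup n ℂ) :
    of (fun i j => Complex.normSq (T i j)) ∈ doublyStochastic ℝ n := by
  have hrow : ∀ {T : Matrix n n ℂ}, T ∈ unitaryGroup n ℂ →
      ∀ i, ∑ j, Complex.normSq (T i j) = 1 := by
    intro T hT i
    have h : (T * Tᴴ) i i = 1 := by
      rw [← star_eq_conjTranspose, Unitary.mul_star_self_of_mem hT, one_apply_eq]
    simp only [mul_apply, conjTranspose_apply, Complex.star_def, Complex.mul_conj] at h
    exact_mod_cast h
  refine mem_doublyStochastic_iff_sum.mpr
    ⟨fun _ _ => Complex.normSq_nonneg _, hrow hT, fun j => ?_⟩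
  simpa [star_apply] using hrow (Unitary.star_mem hT) j

theorem trace_conj_diagonal_mul_conj_diagonal (U V : Matrix n n ℂ) (a b : n → ℝ) :
    ((U * diagonal (fun i => (a i : ℂ)) * Uᴴ) * (V * diagonal (fun j => (b j : ℂ)) * Vᴴ)).trace
      = ((∑ i, ∑ j, Complex.normSq ((Uᴴ * V) i j) * (a i * b j) : ℝ) : ℂ) := by
  set W := Uᴴ * V
  set D := diagonal (fun i => (a i : ℂ))
  set E := diagonal (fun j => (b j : ℂ))
  have hcycle : ((U * D * Uᴴ) * (V * E * Vᴴ)).trace = (D * (W * (E * Wᴴ))).trace := by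
    rw [show (U * D * Uᴴ) * (V * E * Vᴴ) = U * (D * (W * (E * Vᴴ))) by simp [W, mul_assoc],
      trace_mul_comm]
    simp [W, conjTranspose_mul, mul_assoc]
  rw [hcycle]
  simp only [trace, diag, D, E, diagonal_mul]
  simp only [mul_apply, conjTranspose_apply, diagonal_apply, Finset.mul_sum, ite_mul, zero_mul,
    Finset.sum_ite_eq, Finset.mem_univ, if_true]
  push_cast
  refine Finset.sum_congr rfl fun i _ => Finset.sum_congr rfl fun j _ => ?_
  rw [Complex.normSq_eq_conj_mul_self, Complex.star_def]
  ring

/-- Klein's inequality. In eigenbases `ρ = U diag(p) U*`, `σ = V diag(q) V*` both sides become sums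
over the doubly stochastic weights `|(U*V)ᵢⱼ|²`. -/
theorem re_trace_sub_le_re_relEnt {ρ σ : Matrix n n ℂ} (hρ : ρ.PosSemidef) (hσ : σ.PosDef) :
    (ρ.trace - σ.trace).re ≤ (relEnt ρ σ).re := by
  set U := (hρ.1.eigenvectorUnitary : Matrix n n ℂ)
  set V := (hσ.1.eigenvectorUnitary : Matrix n n ℂ)
  set p := hρ.1.eigenvalues
  set q := hσ.1.eigenvalues
  have hρU : ρ = U * diagonal (fun i => (p i : ℂ)) * Uᴴ := hρ.1.spectral_theorem
  have hlogρ : mlog ρ = U * diagonal (fun i => (Real.log (p i) : ℂ)) * Uᴴ := by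
    rw [mlog, dif_pos hρ.1]
  have hlogσ : mlog σ = V * diagonal (fun j => (Real.log (q j) : ℂ)) * Vᴴ := by
    rw [mlog, dif_pos hσ.1]
  have hself : (ρ * mlog ρ).trace = ((∑ i, p i * Real.log (p i) : ℝ) : ℂ) := by
    conv_lhs => rw [hlogρ, hρU]
    have hUU : Uᴴ * U = 1 := Unitary.star_mul_self_of_mem (SetLike.coe_mem _)
    rw [trace_conj_diagonal_mul_conj_diagonal, hUU]
    simp [one_apply, apply_ite Complex.normSq]
  have hcross : (ρ * mlog σ).trace =
      ((∑ i, ∑ j, Complex.normSq ((Uᴴ * V) i j) * (p i * Real.log (q j)) : ℝ) : ℂ) := by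
    rw [hlogσ, hρU, trace_conj_diagonal_mul_conj_diagonal]
  have hW : Uᴴ * V ∈ unitaryGroup n ℂ :=
    mul_mem (Unitary.star_mem (SetLike.coe_mem _)) (SetLike.coe_mem _)
  rw [relEnt, hself, hcross, hρ.1.trace_eq_sum_eigenvalues, hσ.1.trace_eq_sum_eigenvalues]
  simp only [Complex.sub_re, Complex.re_sum, Complex.ofReal_re]
  exact sum_sub_sum_le_of_mem_doublyStochastic
    (normSq_mem_doublyStochastic_of_mem_unitaryGroup hW) hρ.eigenvalues_nonneg hσ.eigenvalues_pos

open scoped MatrixOrder in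
theorem posDef_exp {A : Matrix n n ℂ} (hA : A.IsHermitian) : (NormedSpace.exp A).PosDef :=
  (IsSelfAdjoint.exp_nonneg hA).posSemidef.posDef_iff_isUnit.mpr (isUnit_exp A)

theorem mlog_eq_log {A : Matrix n n ℂ} (hA : A.IsHermitian) : mlog A = CFC.log A := by
  rw [CFC.log, hA.cfc_eq, mlog, dif_pos hA, IsHermitian.cfc, Unitary.conjStarAlgAut_apply]
  rfl

theorem mlog_conj_unitary {U A : Matrix n n ℂ} (hU : U ∈ unitaryGroup n ℂ)
    (hA : A.IsHermitian) : mlog (U * A * star U) = U * mlog A * star U := by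
  let φ := Unitary.conjStarAlgAut ℂ (Matrix n n ℂ) ⟨U, hU⟩
  have hφ : Continuous φ := show Continuous fun X => U * X * star U by fun_prop
  have hUA : (U * A * star U).IsHermitian := isHermitian_mul_mul_conjTranspose U hA
  rw [mlog_eq_log hA, mlog_eq_log hUA, CFC.log, CFC.log]
  exact (StarAlgHomClass.map_cfc φ Real.log A (finite_real_spectrum.continuousOn _) hφ).symm

theorem trace_conj_unitary {U : Matrix n n ℂ} (hU : U ∈ unitaryGroup n ℂ) (A : Matrix n n ℂ) :
    (U * A * star U).trace = A.trace := by
  rw [trace_mul_cycle, Unitary.star_mul_self_of_mem hU, one_mul]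

theorem vN_conj_unitary {U A : Matrix n n ℂ} (hU : U ∈ unitaryGroup n ℂ)
    (hA : A.IsHermitian) : vN (U * A * star U) = vN A := by
  rw [vN, vN, mlog_conj_unitary hU hA, ← trace_conj_unitary hU (A * mlog A)]
  congr 2
  simp only [mul_assoc]
  rw [← mul_assoc (star U) U, Unitary.star_mul_self_of_mem hU, one_mul]

theorem exists_gibbs_eq_smul_exp (β : ℝ) {K : Matrix n n ℂ} (hK : K.IsHermitian) :
    ∃ z : ℝ, 0 < z ∧ gibbs β K = z • NormedSpace.exp ((-β : ℂ) • K) := by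
  rcases isEmpty_or_nonempty n with hn | hn
  · exact ⟨1, one_pos, Subsingleton.elim _ _⟩
  have hpos : 0 < (NormedSpace.exp ((-β : ℂ) • K)).trace :=
    (posDef_exp (hK.smul (IsSelfAdjoint.neg (Complex.conj_ofReal β)))).trace_pos
  obtain ⟨hre, him⟩ := Complex.pos_iff.mp hpos
  refine ⟨(NormedSpace.exp ((-β : ℂ) • K)).trace.re⁻¹, inv_pos.mpr hre, ?_⟩
  rw [gibbs, ← Complex.coe_smul, Complex.ofReal_inv]
  congr 2
  exact Complex.ext rfl him.symm

theorem posDef_gibbs (β : ℝ) {K : Matrix n n ℂ} (hK : K.IsHermitian) : (gibbs β K).PosDef := by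
  obtain ⟨z, hz, hgibbs⟩ := exists_gibbs_eq_smul_exp β hK
  rw [hgibbs]
  exact (posDef_exp (hK.smul (IsSelfAdjoint.neg (Complex.conj_ofReal β)))).smul hz

/-- The constant is `-log Z`, with `Z` the partition function. -/
theorem exists_mlog_gibbs (β : ℝ) {K : Matrix n n ℂ} (hK : K.IsHermitian) :
    ∃ c : ℝ, mlog (gibbs β K) = algebraMap ℝ _ c - (β : ℂ) • K := by
  obtain ⟨z, hz, hgibbs⟩ := exists_gibbs_eq_smul_exp β hK
  have hβK : ((-β : ℂ) • K).IsHermitian := hK.smul (IsSelfAdjoint.neg (Complex.conj_ofReal β))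
  have hE := posDef_exp hβK
  have hspec : ∀ x ∈ spectrum ℝ (NormedSpace.exp ((-β : ℂ) • K)), x ≠ 0 := by
    rw [hE.1.spectrum_real_eq_range_eigenvalues]
    rintro _ ⟨i, rfl⟩
    exact (hE.eigenvalues_pos i).ne'
  refine ⟨Real.log z, ?_⟩
  rw [hgibbs, mlog_eq_log (hE.smul hz).1, CFC.log_smul _ hspec hz.ne' hE.1, CFC.log_exp _ hβK,
    neg_smul, sub_eq_add_neg]

theorem relEnt_conj_gibbs (β : ℝ) {K U : Matrix n n ℂ} (hK : K.IsHermitian)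
    (hU : U ∈ unitaryGroup n ℂ) :
    relEnt (U * gibbs β K * star U) (gibbs β K) =
      β * ((U * gibbs β K * star U - gibbs β K) * K).trace := by
  set σ := gibbs β K
  obtain ⟨c, hc⟩ := exists_mlog_gibbs β hK
  have hentropy : (U * σ * star U * mlog (U * σ * star U)).trace = (σ * mlog σ).trace :=
    neg_injective (vN_conj_unitary hU (posDef_gibbs β hK).1)
  calc relEnt (U * σ * star U) σ = ((σ - U * σ * star U) * mlog σ).trace := by
        rw [relEnt, hentropy, sub_mul, trace_sub]
    _ = β * ((U * σ * star U - σ) * K).trace := by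
        rw [hc, Algebra.algebraMap_eq_smul_one]
        simp only [mul_sub, sub_mul, trace_sub, mul_smul_comm, trace_smul, mul_one,
          trace_conj_unitary hU, smul_eq_mul, sub_self, smul_zero]
        ring

theorem exists_evolve_eq_unitary_conj {H : Matrix n n ℂ} (hH : H.IsHermitian) (t : ℝ) :
    ∃ U ∈ unitaryGroup n ℂ, ∀ ρ, evolve H ρ t = U * ρ * star U := by
  let _ : NormedAlgebra ℚ (Matrix n n ℂ) := .restrictScalars ℚ ℂ _
  have hstar : star ((-(I * t)) • H) = (I * t) • H := by
    rw [star_smul, show star H = H from hH, star_neg, star_mul', Complex.star_def,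
      Complex.conj_I, Complex.conj_ofReal, neg_mul, neg_neg]
  refine ⟨NormedSpace.exp ((-(I * t)) • H), NormedSpace.exp_mem_unitary_of_mem_skewAdjoint ?_,
    fun ρ => ?_⟩
  · rw [skewAdjoint.mem_iff, hstar, neg_smul, neg_neg]
  · rw [evolve, NormedSpace.star_exp, hstar]

theorem trace_evolve_mul_of_commute {H X : Matrix n n ℂ} (hHX : Commute H X)
    (ρ : Matrix n n ℂ) (t : ℝ) : (evolve H ρ t * X).trace = (ρ * X).trace := by
  set E := NormedSpace.exp ((-(I * t)) • H)
  set F := NormedSpace.exp ((I * t) • H)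
  have hFE : F * E = 1 := by
    rw [← exp_add_of_commute _ _ (((Commute.refl H).smul_left _).smul_right _), ← add_smul,
      add_neg_cancel, zero_smul, NormedSpace.exp_zero]
  have hFX : F * X = X * F := ((hHX.smul_left _).exp_left).eq
  calc (evolve H ρ t * X).trace = (E * (ρ * X * F)).trace := by
        rw [evolve, mul_assoc _ F, hFX]
        simp only [E, mul_assoc]
    _ = (ρ * X * (F * E)).trace := by
        rw [trace_mul_comm]
        simp only [mul_assoc]
    _ = (ρ * X).trace := by rw [hFE, mul_one]

end

theorem Matrix.IsHermitian.kronecker {m n : Type*} {A : Matrix m m ℂ} {B : Matrix n n ℂ}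
    (hA : A.IsHermitian) (hB : B.IsHermitian) : (A ⊗ₖ B).IsHermitian := by
  rw [IsHermitian, conjTranspose_kronecker, hA.eq, hB.eq]

section Kronecker

variable {m n : Type*} [Fintype m] [DecidableEq m] [Fintype n] [DecidableEq n]

theorem exp_kronecker_one (A : Matrix m m ℂ) :
    NormedSpace.exp (A ⊗ₖ (1 : Matrix n n ℂ)) = NormedSpace.exp A ⊗ₖ (1 : Matrix n n ℂ) := by
  let _ : NormedAlgebra ℚ (Matrix m m ℂ) := .restrictScalars ℚ ℂ _
  let f : Matrix m m ℂ →ₐ[ℂ] Matrix (m × n) (m × n) ℂ :=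
    { toFun := fun A => A ⊗ₖ (1 : Matrix n n ℂ)
      map_one' := one_kronecker_one
      map_mul' := fun A B => by rw [← mul_kronecker_mul, one_mul]
      map_zero' := zero_kronecker _
      map_add' := fun A B => add_kronecker _ _ _
      commutes' := fun c => by
        simp only [Algebra.algebraMap_eq_smul_one, smul_kronecker, one_kronecker_one] }
  exact (NormedSpace.map_exp f (LinearMap.continuous_of_finiteDimensional f.toLinearMap) A).symm

theorem exp_one_kronecker (B : Matrix n n ℂ) :
    NormedSpace.exp ((1 : Matrix m m ℂ) ⊗ₖ B) = (1 : Matrix m m ℂ) ⊗ₖ NormedSpace.exp B := by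
  let _ : NormedAlgebra ℚ (Matrix n n ℂ) := .restrictScalars ℚ ℂ _
  let f : Matrix n n ℂ →ₐ[ℂ] Matrix (m × n) (m × n) ℂ :=
    { toFun := fun B => (1 : Matrix m m ℂ) ⊗ₖ B
      map_one' := one_kronecker_one
      map_mul' := fun A B => by rw [← mul_kronecker_mul, one_mul]
      map_zero' := kronecker_zero _
      map_add' := fun A B => kronecker_add _ _ _
      commutes' := fun c => by
        simp only [Algebra.algebraMap_eq_smul_one, kronecker_smul, one_kronecker_one] }
  exact (NormedSpace.map_exp f (LinearMap.continuous_of_finiteDimensional f.toLinearMap) B).symm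

theorem gibbs_kronecker_gibbs (βA βB : ℝ) (A : Matrix m m ℂ) (B : Matrix n n ℂ) :
    gibbs βA A ⊗ₖ gibbs βB B =
      gibbs 1 ((βA : ℂ) • A ⊗ₖ (1 : Matrix n n ℂ) + (βB : ℂ) • (1 : Matrix m m ℂ) ⊗ₖ B) := by
  have hsplit : ((-(1 : ℝ) : ℂ) •
      ((βA : ℂ) • A ⊗ₖ (1 : Matrix n n ℂ) + (βB : ℂ) • (1 : Matrix m m ℂ) ⊗ₖ B)) =
      ((-βA : ℂ) • A) ⊗ₖ (1 : Matrix n n ℂ) + (1 : Matrix m m ℂ) ⊗ₖ ((-βB : ℂ) • B) := by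
    rw [smul_kronecker, kronecker_smul]
    push_cast
    module
  have hcomm : Commute (((-βA : ℂ) • A) ⊗ₖ (1 : Matrix n n ℂ))
      ((1 : Matrix m m ℂ) ⊗ₖ ((-βB : ℂ) • B)) := by
    simp only [Commute, SemiconjBy, ← mul_kronecker_mul, one_mul, mul_one]
  rw [gibbs, gibbs, gibbs, hsplit, exp_add_of_commute _ _ hcomm, exp_kronecker_one,
    exp_one_kronecker, ← mul_kronecker_mul, one_mul, mul_one, smul_kronecker, kronecker_smul,
    smul_smul, trace_kronecker, mul_inv]

end Kronecker

theorem clausius_statement_product_gibbs_general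
    {m n : Type*} [Fintype m] [DecidableEq m] [Fintype n] [DecidableEq n]
    (HA : Matrix m m ℂ) (HB : Matrix n n ℂ) (HI : Matrix (m × n) (m × n) ℂ)
    (hHA : HA.IsHermitian) (hHB : HB.IsHermitian) (hHI : HI.IsHermitian)
    (hcomm : ⁅HI, HA ⊗ₖ (1 : Matrix n n ℂ) + (1 : Matrix m m ℂ) ⊗ₖ HB⁆ = 0)
    (H : Matrix (m × n) (m × n) ℂ)
    (hH : H = HA ⊗ₖ (1 : Matrix n n ℂ) + (1 : Matrix m m ℂ) ⊗ₖ HB + HI)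
    (βA βB : ℝ)
    (ρ : Matrix (m × n) (m × n) ℂ) (hρ : ρ = gibbs βA HA ⊗ₖ gibbs βB HB) :
    ∀ t : ℝ,
      0 ≤ (βB - βA) * (((evolve H ρ t - ρ) * ((1 : Matrix m m ℂ) ⊗ₖ HB)).trace).re := by
  intro t
  set SA := HA ⊗ₖ (1 : Matrix n n ℂ)
  set SB := (1 : Matrix m m ℂ) ⊗ₖ HB
  have hSA : SA.IsHermitian := hHA.kronecker isHermitian_one
  have hSB : SB.IsHermitian := isHermitian_one.kronecker hHB
  have hK : ((βA : ℂ) • SA + (βB : ℂ) • SB).IsHermitian :=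
    (hSA.smul (Complex.conj_ofReal βA)).add (hSB.smul (Complex.conj_ofReal βB))
  have hρK : ρ = gibbs 1 ((βA : ℂ) • SA + (βB : ℂ) • SB) :=
    hρ.trans (gibbs_kronecker_gibbs βA βB HA HB)
  have hposdef : ρ.PosDef := hρK ▸ posDef_gibbs 1 hK
  obtain ⟨U, hU, hevolve⟩ := exists_evolve_eq_unitary_conj (hH ▸ (hSA.add hSB).add hHI) t
  have hconserved : ((evolve H ρ t - ρ) * (SA + SB)).trace = 0 := by
    rw [sub_mul, trace_sub, sub_eq_zero]
    exact trace_evolve_mul_of_commute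
      (hH ▸ (Commute.refl _).add_left (commute_iff_lie_eq.mpr hcomm)) ρ t
  have hevolved : (U * ρ * star U).PosSemidef := hposdef.posSemidef.mul_mul_conjTranspose_same U
  have hklein := re_trace_sub_le_re_relEnt hevolved hposdef
  rw [trace_conj_unitary hU, sub_self, hρK, relEnt_conj_gibbs 1 hK hU, ← hρK, ← hevolve] at hklein
  simp only [mul_add, mul_smul_comm, trace_add, trace_smul, smul_eq_mul] at hconserved hklein
  have hheat : (βA : ℂ) * ((evolve H ρ t - ρ) * SA).trace + βB * ((evolve H ρ t - ρ) * SB).trace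
      = ((βB - βA : ℝ) : ℂ) * ((evolve H ρ t - ρ) * SB).trace := by
    push_cast
    linear_combination (βA : ℂ) * hconserved
  simpa [hheat, Complex.re_ofReal_mul] using hklein

/-- Clausius statement for initially uncorrelated Gibbs states: with the
heat-transfer condition `[H_I, H_A + H_B] = 0`, `β_A ≥ β_B` (A colder than B) and initial
state `ρ = ρ_A^{Gibbs} ⊗ ρ_B^{Gibbs}`, the heat transfer
`Q = tr[(e^{-iHt} ρ e^{iHt} - ρ)H_B]` satisfies `(β_B - β_A)·Q ≥ 0` for every `t`:
heat does not flow from the cold system into the hot one. -/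
theorem clausius_statement_product_gibbs
    {m n : Type*} [Fintype m] [DecidableEq m] [Fintype n] [DecidableEq n]
    (HA : Matrix m m ℂ) (HB : Matrix n n ℂ) (HI : Matrix (m × n) (m × n) ℂ)
    (hHA : HA.IsHermitian) (hHB : HB.IsHermitian) (hHI : HI.IsHermitian)
    (hcomm : ⁅HI, HA ⊗ₖ (1 : Matrix n n ℂ) + (1 : Matrix m m ℂ) ⊗ₖ HB⁆ = 0)
    (H : Matrix (m × n) (m × n) ℂ)
    (hH : H = HA ⊗ₖ (1 : Matrix n n ℂ) + (1 : Matrix m m ℂ) ⊗ₖ HB + HI)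
    (βA βB : ℝ) (hβ : βB ≤ βA)
    (ρ : Matrix (m × n) (m × n) ℂ) (hρ : ρ = gibbs βA HA ⊗ₖ gibbs βB HB) :
    ∀ t : ℝ,
      0 ≤ (βB - βA) * (((evolve H ρ t - ρ) * ((1 : Matrix m m ℂ) ⊗ₖ HB)).trace).re :=
  clausius_statement_product_gibbs_general HA HB HI hHA hHB hHI hcomm H hH βA βB ρ hρ
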